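/- arXiv:2301.02701 — 2 statements merged into one kernel-verified Lean document; each statement's English description precedes it below -/
import Mathlib

section
/- Let n ≥ 2 and ρ > 0. Suppose f ∈ C^1(R^{n-1}) satisfies supp f ⊆ complement of B_{2ρ}(0'), |f(x')| · |x'|^{n-1} ≤ c_1 and |∇'f(x')| · |x'|^n ≤ c_2 for all x' ∈ R^{n-1}, with constants c_1, c_2 independent of x'. Then f ∈ H^{1/2}(R^{n-1}) and ‖f‖_{H^{1/2}(R^{n-1})}^2 ≤ C(n) ( c_1^2/ρ^{n-1} + (c_1^2 + c_2^2)/ρ^n ) with a constant C(n) depending only on n. -/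
noncomputable section

open MeasureTheory Metric Set Filter
open scoped ENNReal NNReal RealInnerProductSpace

namespace GG

abbrev En (n : ℕ) := EuclideanSpace ℝ (Fin n)
abbrev En' (n : ℕ) := EuclideanSpace ℝ (Fin (n - 1))

/-- First `n-1` coordinates of a point of `ℝⁿ`. -/
def proj (n : ℕ) (x : En n) : En' n :=
  WithLp.toLp 2 (fun j : Fin (n - 1) => x ⟨(j : ℕ), lt_of_lt_of_le j.2 (Nat.sub_le n 1)⟩)

/-- Last coordinate of a point of `ℝⁿ`. -/
def lastC (n : ℕ) (x : En n) : ℝ :=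
  if hn : 0 < n then x ⟨n - 1, Nat.sub_lt hn one_pos⟩ else 0

/-- The point of `ℝⁿ` with horizontal part `y` and last coordinate `t`. -/
def emb (n : ℕ) (y : En' n) (t : ℝ) : En n :=
  WithLp.toLp 2 (fun i : Fin n => if hi : (i : ℕ) < n - 1 then y ⟨(i : ℕ), hi⟩ else t)

/-- The perturbed half space `{x : xₙ > h(x')}`. -/
def dom (n : ℕ) (h : En' n → ℝ) : Set (En n) := {x | h (proj n x) < lastC n x}

/-- The boundary graph `Γ = {x : xₙ = h(x')}`. -/
def bdry (n : ℕ) (h : En' n → ℝ) : Set (En n) := {x | lastC n x = h (proj n x)}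

open Classical in
/-- Signed distance to `Γ`, positive inside the domain. -/
def sdist (n : ℕ) (h : En' n → ℝ) (x : En n) : ℝ :=
  if x ∈ dom n h then infDist x (bdry n h) else -(infDist x (bdry n h))

/-- `ρ`-unique-projection property of a set. -/
def UniqueProj (n : ℕ) (Γ : Set (En n)) (ρ : ℝ) : Prop :=
  ∀ x : En n, infDist x Γ < ρ → ∃! y, y ∈ Γ ∧ dist x y = infDist x Γ

/-- The reach of `Γ`. -/
def reach (n : ℕ) (Γ : Set (En n)) : ℝ :=
  sSup {ρ : ℝ | 0 < ρ ∧ UniqueProj n Γ ρ}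

/-- BMO seminorm over `Ω`, over balls of radius `< μ`. -/
def bmoSemi (n : ℕ) (Ω : Set (En n)) (μ : ℝ≥0∞) (v : En n → En n) : ℝ≥0∞ :=
  ⨆ (x : En n) (r : ℝ) (_ : 0 < r) (_ : ENNReal.ofReal r < μ) (_ : ball x r ⊆ Ω),
    (volume (ball x r))⁻¹ *
      ∫⁻ y in ball x r, (‖v y - ⨍ z in ball x r, v z ∂volume‖₊ : ℝ≥0∞)

/-- Boundary seminorm `b^ν`. -/
def bSemi (n : ℕ) (Ω Γ : Set (En n)) (ν : ℝ≥0∞) (f : En n → ℝ) : ℝ≥0∞ :=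
  ⨆ (x : En n) (_ : x ∈ Γ) (r : ℝ) (_ : 0 < r) (_ : ENNReal.ofReal r < ν),
    (ENNReal.ofReal (r ^ n))⁻¹ * ∫⁻ y in Ω ∩ ball x r, (‖f y‖₊ : ℝ≥0∞)

/-- Normal component `∇d_Γ · v`. -/
def nc (n : ℕ) (Γ : Set (En n)) (v : En n → En n) (x : En n) : ℝ :=
  fderiv ℝ (fun z => infDist z Γ) x (v x)

/-- The `vBMOL²` norm. -/
def vbmoL2Norm (n : ℕ) (Ω Γ : Set (En n)) (v : En n → En n) : ℝ≥0∞ :=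
  bmoSemi n Ω ⊤ v + bSemi n Ω Γ ⊤ (nc n Γ v) + eLpNorm v 2 (volume.restrict Ω)

/-- Membership in `vBMOL²(Ω)`. -/
def MemvBMOL2 (n : ℕ) (Ω Γ : Set (En n)) (v : En n → En n) : Prop :=
  MemLp v 2 (volume.restrict Ω) ∧ bmoSemi n Ω ⊤ v < ⊤ ∧ bSemi n Ω Γ ⊤ (nc n Γ v) < ⊤

/-- Distributionally divergence free in `Ω`. -/
def DivFreeIn (n : ℕ) (Ω : Set (En n)) (v : En n → En n) : Prop :=
  ∀ φ : En n → ℝ, ContDiff ℝ (⊤ : ℕ∞) φ → HasCompactSupport φ → tsupport φ ⊆ Ω →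
    ∫ x in Ω, ⟪v x, gradient φ x⟫ = 0

/-- Divergence free in `Ω` together with vanishing normal trace on `∂Ω`. -/
def DivFreeZeroTrace (n : ℕ) (Ω : Set (En n)) (v : En n → En n) : Prop :=
  ∀ φ : En n → ℝ, ContDiff ℝ (⊤ : ℕ∞) φ → HasCompactSupport φ →
    ∫ x in Ω, ⟪v x, gradient φ x⟫ = 0

/-- `w` is the (pointwise) gradient of `q` on `Ω`. -/
def IsGradientOn (n : ℕ) (Ω : Set (En n)) (q : En n → ℝ) (w : En n → En n) : Prop :=
  ∀ x ∈ Ω, HasGradientAt q (w x) x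

/-- `w` is the weak (distributional) gradient of `q` on `Ω`. -/
def WeakGradOn (n : ℕ) (Ω : Set (En n)) (q : En n → ℝ) (w : En n → En n) : Prop :=
  ∀ φ : En n → ℝ, ContDiff ℝ (⊤ : ℕ∞) φ → HasCompactSupport φ → tsupport φ ⊆ Ω →
    ∫ x in Ω, q x • gradient φ x = -∫ x in Ω, φ x • w x

/-- `q ∈ L²_loc(Ω)`. -/
def L2loc (n : ℕ) (Ω : Set (En n)) (q : En n → ℝ) : Prop :=
  ∀ Kc : Set (En n), IsCompact Kc → Kc ⊆ Ω → MemLp q 2 (volume.restrict Kc)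

/-- Laplacian. -/
def lap (n : ℕ) (φ : En n → ℝ) (x : En n) : ℝ :=
  ∑ i : Fin n,
    iteratedFDeriv ℝ 2 φ x ![EuclideanSpace.single i 1, EuclideanSpace.single i 1]

/-- Squared Gagliardo seminorm of order 1/2 on `ℝ^{n-1}` (kernel `|x-y|^{-n}`). -/
def gagSqE' (n : ℕ) (f : En' n → ℝ) : ℝ≥0∞ :=
  ∫⁻ x, ∫⁻ y, ENNReal.ofReal (|f x - f y| ^ 2 / ‖x - y‖ ^ n)

/-- The `Ḣ^{1/2}(ℝ^{n-1})` (Gagliardo) norm. -/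
def hHalfNormE' (n : ℕ) (f : En' n → ℝ) : ℝ≥0∞ := gagSqE' n f ^ (1 / 2 : ℝ)

/-- Membership in `Ḣ^{1/2}(ℝ^{n-1})`. -/
def MemHhalfE' (n : ℕ) (f : En' n → ℝ) : Prop :=
  MemLp f (ENNReal.ofReal ((2 * (n : ℝ) - 2) / ((n : ℝ) - 2))) volume ∧ gagSqE' n f < ⊤

/-- Surface measure on a hypersurface: `(n-1)`-dimensional Hausdorff measure. -/
def surf (n : ℕ) : Measure (En n) := μH[((n : ℝ) - 1)]

/-- Squared Gagliardo seminorm of order 1/2 on a hypersurface `Γ ⊆ ℝⁿ`. -/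
def gagSqS (n : ℕ) (Γ : Set (En n)) (f : En n → ℝ) : ℝ≥0∞ :=
  ∫⁻ x in Γ, ∫⁻ y in Γ, ENNReal.ofReal (|f x - f y| ^ 2 / ‖x - y‖ ^ n) ∂surf n ∂surf n

/-- The `Ḣ^{1/2}(Γ)` norm. -/
def hHalfNormS (n : ℕ) (Γ : Set (En n)) (f : En n → ℝ) : ℝ≥0∞ :=
  gagSqS n Γ f ^ (1 / 2 : ℝ)

/-- Membership in `Ḣ^{1/2}(Γ)`. -/
def MemHhalfS (n : ℕ) (Γ : Set (En n)) (f : En n → ℝ) : Prop :=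
  MemLp f (ENNReal.ofReal ((2 * (n : ℝ) - 2) / ((n : ℝ) - 2))) ((surf n).restrict Γ) ∧
    gagSqS n Γ f < ⊤

/-- The dual `Ḣ^{-1/2}(ℝ^{n-1})` norm. -/
def hmHalfNormE' (n : ℕ) (g : En' n → ℝ) : ℝ≥0∞ :=
  ⨆ (f : En' n → ℝ) (_ : MemHhalfE' n f) (_ : hHalfNormE' n f ≤ 1)
    (_ : Integrable (fun y => g y * f y) volume),
    ENNReal.ofReal |∫ y, g y * f y|

/-- The dual `Ḣ^{-1/2}(Γ)` norm. -/
def hmHalfNormS (n : ℕ) (Γ : Set (En n)) (g : En n → ℝ) : ℝ≥0∞ :=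
  ⨆ (f : En n → ℝ) (_ : MemHhalfS n Γ f) (_ : hHalfNormS n Γ f ≤ 1)
    (_ : Integrable (fun y => g y * f y) ((surf n).restrict Γ)),
    ENNReal.ofReal |∫ y in Γ, g y * f y ∂surf n|

/-- The `L^∞(Γ) ∩ Ḣ^{-1/2}(Γ)` norm. -/
def LinfHmHalfNormS (n : ℕ) (Γ : Set (En n)) (g : En n → ℝ) : ℝ≥0∞ :=
  eLpNorm g ⊤ ((surf n).restrict Γ) + hmHalfNormS n Γ g

/-- Membership in `L^∞(Γ) ∩ Ḣ^{-1/2}(Γ)`. -/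
def MemLinfHmHalfS (n : ℕ) (Γ : Set (En n)) (g : En n → ℝ) : Prop :=
  MemLp g ⊤ ((surf n).restrict Γ) ∧ hmHalfNormS n Γ g < ⊤

/-- Fundamental solution of `-Δ` in `ℝⁿ`. -/
def fundSol (n : ℕ) (x : En n) : ℝ :=
  if n = 2 then -Real.log ‖x‖ / (2 * Real.pi)
  else ‖x‖ ^ ((2 : ℝ) - n) / ((n : ℝ) * ((n : ℝ) - 2) * (volume (ball (0 : En n) 1)).toReal)

/-- Outward unit normal of the graph `Γ` at the point over `y'`. -/
def outNormal (n : ℕ) (h : En' n → ℝ) (y' : En' n) : En n :=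
  (Real.sqrt (1 + ‖gradient h y'‖ ^ 2))⁻¹ • emb n (gradient h y') (-1)

/-- `∂E/∂n_y (x - y)`: normal derivative in `y` of `E(x - ·)`. -/
def dEdny (n : ℕ) (h : En' n → ℝ) (x y : En n) : ℝ :=
  fderiv ℝ (fun z => fundSol n (x - z)) y (outNormal n h (proj n y))

/-- `∂E/∂n_x (x - y)`: exterior normal derivative in `x`, `n_x = -∇d(x)`. -/
def dEdnx (n : ℕ) (h : En' n → ℝ) (x y : En n) : ℝ :=
  fderiv ℝ (fun z => fundSol n (z - y)) x (-(gradient (sdist n h) x))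

/-- The double layer potential `Qg`. -/
def Qop (n : ℕ) (h : En' n → ℝ) (g : En n → ℝ) (x : En n) : ℝ :=
  ∫ y in bdry n h, dEdnx n h x y * g y ∂surf n

/-- The boundary trace operator `S`. -/
def Sop (n : ℕ) (h : En' n → ℝ) (g : En n → ℝ) (x₀ : En n) : ℝ :=
  -∫ y in bdry n h, dEdnx n h x₀ y * g y ∂surf n

/-- Single layer potential `E * (δ_Γ ⊗ g)`. -/
def SLP (n : ℕ) (h : En' n → ℝ) (g : En n → ℝ) (x : En n) : ℝ :=
  ∫ y in bdry n h, fundSol n (x - y) * g y ∂surf n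

/-- Single layer potential on the hyperplane `∂ℝⁿ₊`. -/
def SLPhalf (n : ℕ) (g : En' n → ℝ) (x : En n) : ℝ :=
  ∫ y', fundSol n (x - emb n y' 0) * g y'

/-- `sup |h|`. -/
def supAbs (n : ℕ) (h : En' n → ℝ) : ℝ := ⨆ y, |h y|

/-- `sup ‖∇'h‖`. -/
def supGrad (n : ℕ) (h : En' n → ℝ) : ℝ := ⨆ y, ‖fderiv ℝ h y‖

/-- `sup ‖∇'²h‖`. -/
def supHess (n : ℕ) (h : En' n → ℝ) : ℝ := ⨆ y, ‖fderiv ℝ (fderiv ℝ h) y‖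

/-- `‖h‖_{C¹}`. -/
def normC1 (n : ℕ) (h : En' n → ℝ) : ℝ := supAbs n h + supGrad n h

/-- `C_s(h) = 1 + ‖h‖_{C¹}`. -/
def Cs (n : ℕ) (h : En' n → ℝ) : ℝ := 1 + normC1 n h

/-- `C_1(h) = 1 + R_h ‖∇'²h‖_∞`. -/
def C1c (n : ℕ) (h : En' n → ℝ) (Rh : ℝ) : ℝ := 1 + Rh * supHess n h

/-- `C_{*,1}(h)`. -/
def Cst1 (n : ℕ) (h : En' n → ℝ) (Rh : ℝ) : ℝ :=
  C1c n h Rh ^ 3 * (1 + Rh ^ ((1 : ℝ) / 4)) *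
    (Rh ^ ((1 : ℝ) / 2) * supHess n h + Rh ^ ((5 : ℝ) / 2) * supHess n h ^ 3)

/-- `C_{*,2}(h)`. -/
def Cst2 (n : ℕ) (h : En' n → ℝ) (Rh : ℝ) : ℝ :=
  (Rh + Rh ^ (1 / (2 * (n : ℝ)))) * supHess n h + (Rh ^ ((n : ℝ) - 1) + 1) * normC1 n h

/-- `R_h` is the smallest radius with `supp h ⊆ closedBall 0 R`. -/
def IsSuppRadius (n : ℕ) (h : En' n → ℝ) (Rh : ℝ) : Prop :=
  IsLeast {R : ℝ | 0 ≤ R ∧ tsupport h ⊆ closedBall 0 R} Rh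

section AuxAnnuli

variable {E : Type*} [NormedAddCommGroup E] [NormedSpace ℝ E] [MeasurableSpace E] [BorelSpace E]
  [FiniteDimensional ℝ E]

lemma annuli_outer (μ : Measure E) [μ.IsAddHaarMeasure] {s : ℕ}
    (hs : Module.finrank ℝ E < s) {R : ℝ} (hR : 0 < R) :
    ∫⁻ x in (ball (0:E) R)ᶜ, ENNReal.ofReal (1/‖x‖^s) ∂μ ≤
      2 * μ (ball 0 1) *
        ENNReal.ofReal (2^(Module.finrank ℝ E) * (R^(Module.finrank ℝ E)/R^s)) := by
  set d := Module.finrank ℝ E with hd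
  have hsub : (ball (0:E) R)ᶜ ⊆ ⋃ k : ℕ, closedBall (0:E) (2^(k+1)*R) \ ball 0 (2^k*R) := by
    intro x hx
    rw [Set.mem_compl_iff, mem_ball_zero_iff, not_lt] at hx
    obtain ⟨k, hk1, hk2⟩ := exists_nat_pow_near ((one_le_div hR).2 hx) one_lt_two
    refine Set.mem_iUnion.2 ⟨k, ⟨?_, ?_⟩⟩
    · rw [mem_closedBall_zero_iff]
      have := (div_lt_iff₀ hR).1 hk2
      linarith
    · rw [mem_ball_zero_iff, not_lt]
      exact (le_div_iff₀ hR).1 hk1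
  have hterm : ∀ k : ℕ,
      ∫⁻ x in closedBall (0:E) (2^(k+1)*R) \ ball 0 (2^k*R), ENNReal.ofReal (1/‖x‖^s) ∂μ ≤
        ENNReal.ofReal (2^d*(R^d/R^s)) * (ENNReal.ofReal (1/2))^k * μ (ball 0 1) := by
    intro k
    have h2k : (0:ℝ) < 2^k*R := by positivity
    calc ∫⁻ x in closedBall (0:E) (2^(k+1)*R) \ ball 0 (2^k*R), ENNReal.ofReal (1/‖x‖^s) ∂μ
        ≤ ∫⁻ _ in closedBall (0:E) (2^(k+1)*R) \ ball 0 (2^k*R),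
            ENNReal.ofReal (1/(2^k*R)^s) ∂μ := by
          refine setLIntegral_mono' (measurableSet_closedBall.diff measurableSet_ball) ?_
          intro x hx
          have hxn : 2^k*R ≤ ‖x‖ := by
            have := hx.2
            rw [mem_ball_zero_iff, not_lt] at this
            exact this
          exact ENNReal.ofReal_le_ofReal
            (one_div_le_one_div_of_le (by positivity) (pow_le_pow_left₀ h2k.le hxn s))
      _ = ENNReal.ofReal (1/(2^k*R)^s) * μ (closedBall (0:E) (2^(k+1)*R) \ ball 0 (2^k*R)) :=
          setLIntegral_const _ _
      _ ≤ ENNReal.ofReal (1/(2^k*R)^s) * μ (closedBall (0:E) (2^(k+1)*R)) := by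
          gcongr
          exact diff_subset
      _ = ENNReal.ofReal (1/(2^k*R)^s) *
            (ENNReal.ofReal ((2^(k+1)*R)^d) * μ (ball 0 1)) := by
          rw [μ.addHaar_closedBall 0 (by positivity)]
      _ = ENNReal.ofReal ((2^(k+1)*R)^d * (1/(2^k*R)^s)) * μ (ball 0 1) := by
          rw [← mul_assoc, ← ENNReal.ofReal_mul (by positivity), mul_comm (1/(2^k*R)^s)]
      _ ≤ ENNReal.ofReal (2^d*(R^d/R^s)) * (ENNReal.ofReal (1/2))^k * μ (ball 0 1) := by
          gcongr ?_ * _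
          rw [← ENNReal.ofReal_pow (by norm_num), ← ENNReal.ofReal_mul (by positivity)]
          refine ENNReal.ofReal_le_ofReal ?_
          have hsplit : ((2:ℝ)^(k+1)*R)^d * (1/(2^k*R)^s)
              = ((2:ℝ)^(k+1))^d/((2:ℝ)^k)^s * (R^d/R^s) := by
            rw [mul_pow, mul_pow]
            field_simp
          rw [hsplit]
          have hks : k*(d+1) ≤ k*s := Nat.mul_le_mul_left k hs
          have h1 : ((2:ℝ)^(k+1))^d/((2:ℝ)^k)^s ≤ 2^d * (1/2)^k := by
            rw [← pow_mul, ← pow_mul]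
            calc (2:ℝ)^((k+1)*d)/2^(k*s) ≤ 2^d/2^k := by
                  rw [div_le_div_iff₀ (by positivity) (by positivity), ← pow_add, ← pow_add]
                  refine pow_le_pow_right₀ one_le_two ?_
                  have h1 : k*(d+1) ≤ k*s := Nat.mul_le_mul_left k (Nat.succ_le_of_lt hs)
                  have h2 : k*(d+1) = k*d + k := Nat.mul_succ k d
                  have h3 : (k+1)*d = k*d + d := by ring
                  omega
              _ = 2^d * (1/2)^k := by rw [one_div, inv_pow, div_eq_mul_inv]
          calc ((2:ℝ)^(k+1))^d/((2:ℝ)^k)^s * (R^d/R^s) ≤ (2^d * (1/2)^k) * (R^d/R^s) :=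
                mul_le_mul_of_nonneg_right h1 (by positivity)
            _ = 2^d*(R^d/R^s) * (1/2)^k := by ring
  calc ∫⁻ x in (ball (0:E) R)ᶜ, ENNReal.ofReal (1/‖x‖^s) ∂μ
      ≤ ∫⁻ x in ⋃ k : ℕ, closedBall (0:E) (2^(k+1)*R) \ ball 0 (2^k*R),
          ENNReal.ofReal (1/‖x‖^s) ∂μ := lintegral_mono_set hsub
    _ ≤ ∑' k : ℕ, ∫⁻ x in closedBall (0:E) (2^(k+1)*R) \ ball 0 (2^k*R),
          ENNReal.ofReal (1/‖x‖^s) ∂μ := lintegral_iUnion_le _ _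
    _ ≤ ∑' k : ℕ, ENNReal.ofReal (2^d*(R^d/R^s)) * (ENNReal.ofReal (1/2))^k * μ (ball 0 1) :=
        ENNReal.tsum_le_tsum hterm
    _ = ENNReal.ofReal (2^d*(R^d/R^s)) * ((∑' k : ℕ, (ENNReal.ofReal (1/2))^k) * μ (ball 0 1)) := by
        simp_rw [mul_assoc]
        rw [ENNReal.tsum_mul_left, ENNReal.tsum_mul_right]
    _ ≤ 2 * μ (ball 0 1) * ENNReal.ofReal (2^d*(R^d/R^s)) := by
        rw [ENNReal.tsum_geometric]
        have h12 : ENNReal.ofReal (1/2 : ℝ) = 2⁻¹ := by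
          rw [one_div, ENNReal.ofReal_inv_of_pos two_pos]
          norm_num
        rw [h12, ENNReal.one_sub_inv_two, inv_inv]
        exact le_of_eq (by ring)

lemma annuli_inner (μ : Measure E) [μ.IsAddHaarMeasure] [Nontrivial E] {s : ℕ}
    (hs : s < Module.finrank ℝ E) {R : ℝ} (hR : 0 < R) :
    ∫⁻ x in closedBall (0:E) R, ENNReal.ofReal (1/‖x‖^s) ∂μ ≤
      2 * μ (ball 0 1) *
        ENNReal.ofReal (2^s * (R^(Module.finrank ℝ E)/R^s)) := by
  set d := Module.finrank ℝ E with hd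
  have hsub : closedBall (0:E) R ⊆
      {0} ∪ ⋃ k : ℕ, closedBall (0:E) (R/2^k) \ ball 0 (R/2^(k+1)) := by
    intro x hx
    rw [mem_closedBall_zero_iff] at hx
    rcases eq_or_ne x 0 with rfl | hx0
    · exact Or.inl rfl
    · have hxpos : 0 < ‖x‖ := norm_pos_iff.2 hx0
      obtain ⟨k, hk1, hk2⟩ := exists_nat_pow_near ((one_le_div hxpos).2 hx) one_lt_two
      refine Or.inr (Set.mem_iUnion.2 ⟨k, ⟨?_, ?_⟩⟩)
      · rw [mem_closedBall_zero_iff]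
        rw [le_div_iff₀ hxpos] at hk1
        rw [le_div_iff₀ (by positivity)]
        linarith
      · rw [mem_ball_zero_iff, not_lt]
        rw [div_lt_iff₀ hxpos] at hk2
        rw [div_le_iff₀ (by positivity)]
        linarith
  have hterm : ∀ k : ℕ,
      ∫⁻ x in closedBall (0:E) (R/2^k) \ ball 0 (R/2^(k+1)), ENNReal.ofReal (1/‖x‖^s) ∂μ ≤
        ENNReal.ofReal (2^s*(R^d/R^s)) * (ENNReal.ofReal (1/2))^k * μ (ball 0 1) := by
    intro k
    have h2k : (0:ℝ) < R/2^(k+1) := by positivity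
    calc ∫⁻ x in closedBall (0:E) (R/2^k) \ ball 0 (R/2^(k+1)), ENNReal.ofReal (1/‖x‖^s) ∂μ
        ≤ ∫⁻ _ in closedBall (0:E) (R/2^k) \ ball 0 (R/2^(k+1)),
            ENNReal.ofReal (1/(R/2^(k+1))^s) ∂μ := by
          refine setLIntegral_mono' (measurableSet_closedBall.diff measurableSet_ball) ?_
          intro x hx
          have hxn : R/2^(k+1) ≤ ‖x‖ := by
            have := hx.2
            rw [mem_ball_zero_iff, not_lt] at this
            exact this
          exact ENNReal.ofReal_le_ofReal
            (one_div_le_one_div_of_le (by positivity) (pow_le_pow_left₀ h2k.le hxn s))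
      _ = ENNReal.ofReal (1/(R/2^(k+1))^s) * μ (closedBall (0:E) (R/2^k) \ ball 0 (R/2^(k+1))) :=
          setLIntegral_const _ _
      _ ≤ ENNReal.ofReal (1/(R/2^(k+1))^s) * μ (closedBall (0:E) (R/2^k)) := by
          gcongr
          exact diff_subset
      _ = ENNReal.ofReal (1/(R/2^(k+1))^s) *
            (ENNReal.ofReal ((R/2^k)^d) * μ (ball 0 1)) := by
          rw [μ.addHaar_closedBall 0 (by positivity)]
      _ = ENNReal.ofReal ((R/2^k)^d * (1/(R/2^(k+1))^s)) * μ (ball 0 1) := by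
          rw [← mul_assoc, ← ENNReal.ofReal_mul (by positivity), mul_comm (1/(R/2^(k+1))^s)]
      _ ≤ ENNReal.ofReal (2^s*(R^d/R^s)) * (ENNReal.ofReal (1/2))^k * μ (ball 0 1) := by
          gcongr ?_ * _
          rw [← ENNReal.ofReal_pow (by norm_num), ← ENNReal.ofReal_mul (by positivity)]
          refine ENNReal.ofReal_le_ofReal ?_
          have hsplit : (R/(2:ℝ)^k)^d * (1/(R/2^(k+1))^s)
              = ((2:ℝ)^(k+1))^s/((2:ℝ)^k)^d * (R^d/R^s) := by
            rw [div_pow, div_pow]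
            field_simp
          rw [hsplit]
          have h1 : ((2:ℝ)^(k+1))^s/((2:ℝ)^k)^d ≤ 2^s * (1/2)^k := by
            rw [← pow_mul, ← pow_mul]
            calc (2:ℝ)^((k+1)*s)/2^(k*d) ≤ 2^s/2^k := by
                  rw [div_le_div_iff₀ (by positivity) (by positivity), ← pow_add, ← pow_add]
                  refine pow_le_pow_right₀ one_le_two ?_
                  have h1 : k*(s+1) ≤ k*d := Nat.mul_le_mul_left k (Nat.succ_le_of_lt hs)
                  have h2 : k*(s+1) = k*s + k := Nat.mul_succ k s
                  have h3 : (k+1)*s = k*s + s := by ring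
                  omega
              _ = 2^s * (1/2)^k := by rw [one_div, inv_pow, div_eq_mul_inv]
          calc ((2:ℝ)^(k+1))^s/((2:ℝ)^k)^d * (R^d/R^s) ≤ (2^s * (1/2)^k) * (R^d/R^s) :=
                mul_le_mul_of_nonneg_right h1 (by positivity)
            _ = 2^s*(R^d/R^s) * (1/2)^k := by ring
  calc ∫⁻ x in closedBall (0:E) R, ENNReal.ofReal (1/‖x‖^s) ∂μ
      ≤ ∫⁻ x in {0} ∪ ⋃ k : ℕ, closedBall (0:E) (R/2^k) \ ball 0 (R/2^(k+1)),
          ENNReal.ofReal (1/‖x‖^s) ∂μ := lintegral_mono_set hsub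
    _ ≤ (∫⁻ x in ({0}:Set E), ENNReal.ofReal (1/‖x‖^s) ∂μ) +
          ∫⁻ x in ⋃ k : ℕ, closedBall (0:E) (R/2^k) \ ball 0 (R/2^(k+1)),
          ENNReal.ofReal (1/‖x‖^s) ∂μ := lintegral_union_le _ _ _
    _ = ∫⁻ x in ⋃ k : ℕ, closedBall (0:E) (R/2^k) \ ball 0 (R/2^(k+1)),
          ENNReal.ofReal (1/‖x‖^s) ∂μ := by
        rw [setLIntegral_measure_zero _ _ (measure_singleton 0), zero_add]
    _ ≤ ∑' k : ℕ, ∫⁻ x in closedBall (0:E) (R/2^k) \ ball 0 (R/2^(k+1)),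
          ENNReal.ofReal (1/‖x‖^s) ∂μ := lintegral_iUnion_le _ _
    _ ≤ ∑' k : ℕ, ENNReal.ofReal (2^s*(R^d/R^s)) * (ENNReal.ofReal (1/2))^k * μ (ball 0 1) :=
        ENNReal.tsum_le_tsum hterm
    _ = ENNReal.ofReal (2^s*(R^d/R^s)) * ((∑' k : ℕ, (ENNReal.ofReal (1/2))^k) * μ (ball 0 1)) := by
        simp_rw [mul_assoc]
        rw [ENNReal.tsum_mul_left, ENNReal.tsum_mul_right]
    _ ≤ 2 * μ (ball 0 1) * ENNReal.ofReal (2^s*(R^d/R^s)) := by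
        rw [ENNReal.tsum_geometric]
        have h12 : ENNReal.ofReal (1/2 : ℝ) = 2⁻¹ := by
          rw [one_div, ENNReal.ofReal_inv_of_pos two_pos]
          norm_num
        rw [h12, ENNReal.one_sub_inv_two, inv_inv]
        exact le_of_eq (by ring)

end AuxAnnuli

set_option maxHeartbeats 2000000

/-- Proposition 9 of the paper: a criterion for membership in
`H^{1/2}(ℝ^{n-1})`.  If `f ∈ C¹(ℝ^{n-1})` is supported outside `B_{2ρ}(0')` with
`|f(x')||x'|^{n-1} ≤ c₁` and `|∇'f(x')||x'|ⁿ ≤ c₂`, then `f ∈ H^{1/2}(ℝ^{n-1})` and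
`‖f‖²_{H^{1/2}} ≤ C(n) (c₁²/ρ^{n-1} + (c₁² + c₂²)/ρⁿ)`. -/
theorem criterion_Hhalf_membership (n : ℕ) (hn : 2 ≤ n) :
    ∃ C : ℝ, 0 < C ∧
      ∀ ρ : ℝ, 0 < ρ → ∀ c₁ c₂ : ℝ, ∀ f : En' n → ℝ, ContDiff ℝ 1 f →
        tsupport f ⊆ (ball (0 : En' n) (2 * ρ))ᶜ →
        (∀ x' : En' n, |f x'| * ‖x'‖ ^ (n - 1) ≤ c₁) →
        (∀ x' : En' n, ‖fderiv ℝ f x'‖ * ‖x'‖ ^ n ≤ c₂) →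
        MemLp f 2 volume ∧ gagSqE' n f < ⊤ ∧
        eLpNorm f 2 volume ^ 2 + gagSqE' n f ≤
          ENNReal.ofReal (C * (c₁ ^ 2 / ρ ^ (n - 1) + (c₁ ^ 2 + c₂ ^ 2) / ρ ^ n)) := by
  classical
  have hd1 : 1 ≤ n - 1 := by omega
  set d := n - 1 with hdd
  haveI : Nonempty (Fin d) := ⟨⟨0, by omega⟩⟩
  haveI hnt : Nontrivial (En' n) := inferInstance
  have hfr : Module.finrank ℝ (En' n) = d := finrank_euclideanSpace_fin
  set B1 : ℝ≥0∞ := volume (ball (0 : En' n) 1) with hB1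
  have hB1top : B1 ≠ ⊤ := measure_ball_lt_top.ne
  set v : ℝ := B1.toReal with hv
  have hv0 : 0 ≤ v := ENNReal.toReal_nonneg
  have h2V : (2 : ℝ≥0∞) * B1 = ENNReal.ofReal (2*v) := by
    rw [ENNReal.ofReal_mul (by norm_num), ENNReal.ofReal_ofNat, ENNReal.ofReal_toReal hB1top]
  set K₁ : ℝ := 2*v*2^d with hK₁
  set K₂ : ℝ := 2*v*2^(n-2) with hK₂
  have hK₁0 : 0 ≤ K₁ := by positivity
  have hK₂0 : 0 ≤ K₂ := by positivity
  have hOut : ∀ s : ℕ, d < s → ∀ R : ℝ, 0 < R →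
      ∫⁻ x in (ball (0 : En' n) R)ᶜ, ENNReal.ofReal (1/‖x‖^s) ≤
        ENNReal.ofReal (K₁ * (R^d/R^s)) := by
    intro s hsd R hR
    have h := annuli_outer (volume : Measure (En' n)) (s := s) (by rw [hfr]; exact hsd) hR
    rw [hfr] at h
    refine h.trans ?_
    rw [h2V, ← ENNReal.ofReal_mul (by positivity)]
    exact ENNReal.ofReal_le_ofReal (le_of_eq (by rw [hK₁]; ring))
  have hInn : ∀ R : ℝ, 0 < R →
      ∫⁻ x in closedBall (0 : En' n) R, ENNReal.ofReal (1/‖x‖^(n-2)) ≤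
        ENNReal.ofReal (K₂ * (R^d/R^(n-2))) := by
    intro R hR
    have h := annuli_inner (volume : Measure (En' n)) (s := n-2) (by rw [hfr]; omega) hR
    rw [hfr] at h
    refine h.trans ?_
    rw [h2V, ← ENNReal.ofReal_mul (by positivity)]
    exact ENNReal.ofReal_le_ofReal (le_of_eq (by rw [hK₂]; ring))
  refine ⟨K₁ + 4*K₁^2 + 2*4^n*K₁*K₂ + 1, by positivity, ?_⟩
  intro ρ hρ c₁ c₂ f hf hsupp hf1 hf2
  have hc₁ : 0 ≤ c₁ := by
    have h := hf1 0
    rwa [norm_zero, zero_pow (by omega : n - 1 ≠ 0), mul_zero] at h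
  have hc₂ : 0 ≤ c₂ := by
    have h := hf2 0
    rwa [norm_zero, zero_pow (by omega : n ≠ 0), mul_zero] at h
  have hf0 : ∀ x : En' n, ‖x‖ < 2*ρ → f x = 0 := by
    intro x hx
    apply image_eq_zero_of_notMem_tsupport
    intro hmem
    exact (hsupp hmem) (mem_ball_zero_iff.2 hx)
  have hfb : ∀ x : En' n, 2*ρ ≤ ‖x‖ → |f x| ≤ c₁/‖x‖^d := by
    intro x hx
    have hxp : 0 < ‖x‖ := lt_of_lt_of_le (by positivity) hx
    rw [le_div_iff₀ (by positivity)]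
    exact hf1 x
  have hdiff : Differentiable ℝ f := hf.differentiable one_ne_zero
  have hlip : ∀ x y : En' n, 2*ρ ≤ ‖x‖ → ‖x - y‖ ≤ ρ →
      |f x - f y| ≤ (2^n*c₂/‖x‖^n) * ‖x - y‖ := by
    intro x y hx hxy
    have hxp : 0 < ‖x‖ := lt_of_lt_of_le (by positivity) hx
    have hb : ∀ z ∈ segment ℝ y x, ‖fderiv ℝ f z‖ ≤ 2^n*c₂/‖x‖^n := by
      intro z hz
      have hzx : ‖x - z‖ ≤ ‖x - y‖ := by
        obtain ⟨a, b, ha, hb', hab, rfl⟩ := hz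
        have hxz : x - (a • y + b • x) = a • (x - y) := by
          have hxx : x = (a+b) • x := by rw [hab, one_smul]
          nth_rewrite 1 [hxx]
          module
        rw [hxz, norm_smul, Real.norm_eq_abs, abs_of_nonneg ha]
        have ha1 : a ≤ 1 := by linarith
        exact mul_le_of_le_one_left (norm_nonneg _) ha1
      have hznorm : ‖x‖/2 ≤ ‖z‖ := by
        have h1 : ‖x‖ - ‖z‖ ≤ ‖x - z‖ := norm_sub_norm_le x z
        linarith
      have hzpos : 0 < ‖z‖ := by linarith
      have hder : ‖fderiv ℝ f z‖ ≤ c₂/‖z‖^n := by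
        rw [le_div_iff₀ (by positivity)]
        exact hf2 z
      refine hder.trans ?_
      rw [div_le_div_iff₀ (by positivity) (by positivity)]
      calc c₂ * ‖x‖^n ≤ c₂ * (2*‖z‖)^n := by
            have h2 : ‖x‖^n ≤ (2*‖z‖)^n := pow_le_pow_left₀ (norm_nonneg x) (by linarith) n
            exact mul_le_mul_of_nonneg_left h2 hc₂
        _ = 2^n*c₂*‖z‖^n := by rw [mul_pow]; ring
    have h := Convex.norm_image_sub_le_of_norm_fderiv_le
      (fun z _ => hdiff z) hb (convex_segment y x)
      (left_mem_segment ℝ y x) (right_mem_segment ℝ y x)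
    simpa [Real.norm_eq_abs] using h
  set Q : En' n → ℝ≥0∞ :=
    fun u => ((closedBall (0 : En' n) ρ)ᶜ).indicator (fun u => ENNReal.ofReal (1/‖u‖^n)) u
    with hQdef
  set Rq : En' n → ℝ≥0∞ :=
    fun u => (closedBall (0 : En' n) ρ).indicator (fun u => ENNReal.ofReal (1/‖u‖^(n-2))) u
    with hRdef
  set Af : En' n → ℝ≥0∞ :=
    fun x => ((ball (0 : En' n) (2*ρ))ᶜ).indicator
      (fun x => ENNReal.ofReal ((4:ℝ)^n*c₂^2 * (1/‖x‖^(2*n)))) x with hAdef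
  set Bf : En' n → ℝ≥0∞ := fun x => ENNReal.ofReal (2*(f x)^2) with hBdef
  have hfm : Measurable f := hf.continuous.measurable
  have mQ : Measurable Q :=
    (ENNReal.measurable_ofReal.comp
      (measurable_const.div (measurable_norm.pow_const n))).indicator
      measurableSet_closedBall.compl
  have mR : Measurable Rq :=
    (ENNReal.measurable_ofReal.comp
      (measurable_const.div (measurable_norm.pow_const (n-2)))).indicator
      measurableSet_closedBall
  have mA : Measurable Af :=
    (ENNReal.measurable_ofReal.comp
      (measurable_const.mul (measurable_const.div (measurable_norm.pow_const (2*n))))).indicator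
      measurableSet_ball.compl
  have mB : Measurable Bf :=
    ENNReal.measurable_ofReal.comp ((hfm.pow_const 2).const_mul 2)
  have hAne : ∀ x, Af x ≠ ⊤ := by
    intro x
    simp only [hAdef, Set.indicator_apply]
    split_ifs <;> simp
  set P : Measure (En' n × En' n) := (volume : Measure (En' n)).prod volume with hPdef
  set F : En' n × En' n → ℝ≥0∞ :=
    fun p => ENNReal.ofReal (|f p.1 - f p.2|^2 / ‖p.1 - p.2‖^n) with hFdef
  have msub : Measurable fun p : En' n × En' n => p.1 - p.2 :=
    measurable_fst.sub measurable_snd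
  have mF : Measurable F :=
    ENNReal.measurable_ofReal.comp
      ((((hfm.comp measurable_fst).sub (hfm.comp measurable_snd)).abs.pow_const 2).div
        (msub.norm.pow_const n))
  set G1 : En' n × En' n → ℝ≥0∞ := fun p => Bf p.1 * Q (p.1 - p.2) with hG1def
  set G1' : En' n × En' n → ℝ≥0∞ := fun p => Bf p.2 * Q (p.1 - p.2) with hG1'def
  set G2 : En' n × En' n → ℝ≥0∞ := fun p => Af p.1 * Rq (p.1 - p.2) with hG2def
  set G2' : En' n × En' n → ℝ≥0∞ := fun p => Af p.2 * Rq (p.1 - p.2) with hG2'def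
  have mG1 : Measurable G1 := (mB.comp measurable_fst).mul (mQ.comp msub)
  have mG1' : Measurable G1' := (mB.comp measurable_snd).mul (mQ.comp msub)
  have mG2 : Measurable G2 := (mA.comp measurable_fst).mul (mR.comp msub)
  have mG2' : Measurable G2' := (mA.comp measurable_snd).mul (mR.comp msub)
  have hQsymm : ∀ u : En' n, Q (-u) = Q u := by
    intro u
    simp [hQdef, Set.indicator_apply, mem_compl_iff, mem_closedBall_zero_iff, norm_neg]
  have hRsymm : ∀ u : En' n, Rq (-u) = Rq u := by
    intro u
    simp [hRdef, Set.indicator_apply, mem_closedBall_zero_iff, norm_neg]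
  have hpt : ∀ p : En' n × En' n, F p ≤ G1 p + G1' p + G2 p + G2' p := by
    rintro ⟨x, y⟩
    show ENNReal.ofReal (|f x - f y|^2/‖x - y‖^n) ≤
      Bf x * Q (x - y) + Bf y * Q (x - y) + Af x * Rq (x - y) + Af y * Rq (x - y)
    have main : ∀ a b : En' n, 2*ρ ≤ ‖a‖ → ‖a - b‖ ≤ ρ →
        ENNReal.ofReal (|f a - f b|^2/‖a - b‖^n) ≤ Af a * Rq (a - b) := by
      intro a b ha hab
      have hAv : Af a = ENNReal.ofReal (4^n*c₂^2 * (1/‖a‖^(2*n))) :=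
        Set.indicator_of_mem (by rw [mem_compl_iff, mem_ball_zero_iff]; exact not_lt.2 ha) _
      have hRv : Rq (a - b) = ENNReal.ofReal (1/‖a - b‖^(n-2)) :=
        Set.indicator_of_mem (mem_closedBall_zero_iff.2 hab) _
      rw [hAv, hRv, ← ENNReal.ofReal_mul (by positivity)]
      apply ENNReal.ofReal_le_ofReal
      have hapos : 0 < ‖a‖ := lt_of_lt_of_le (by positivity) ha
      rcases eq_or_lt_of_le (norm_nonneg (a - b)) with h0 | h0
      · have hab0 : ‖a - b‖ = 0 := h0.symm
        rcases eq_or_ne n 0 with hn0 | hn0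
        · omega
        rw [hab0, zero_pow hn0, div_zero]
        positivity
      · have hL := hlip a b ha hab
        have h1 : |f a - f b|^2 ≤ (2^n*c₂/‖a‖^n)^2 * ‖a - b‖^2 := by
          have h2 := pow_le_pow_left₀ (abs_nonneg (f a - f b)) hL 2
          calc |f a - f b|^2 ≤ ((2^n*c₂/‖a‖^n) * ‖a - b‖)^2 := h2
            _ = (2^n*c₂/‖a‖^n)^2 * ‖a - b‖^2 := by ring
        have htt : ‖a - b‖^2/‖a - b‖^n = 1/‖a - b‖^(n-2) := by
          have he : ‖a - b‖^n = ‖a - b‖^(n-2)*‖a - b‖^2 := by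
            rw [← pow_add]
            congr 1
            omega
          rw [he, mul_comm, div_mul_eq_div_div,
            div_self (by positivity : (‖a - b‖^2 : ℝ) ≠ 0)]
        have hsq : ((2:ℝ)^n*c₂/‖a‖^n)^2 = 4^n*c₂^2*(1/‖a‖^(2*n)) := by
          have h4 : ((2:ℝ)^n)^2 = 4^n := by
            rw [← pow_mul, mul_comm, pow_mul]
            norm_num
          rw [div_pow, mul_pow, h4, ← pow_mul, mul_comm n 2]
          ring
        calc |f a - f b|^2/‖a - b‖^n
            ≤ ((2^n*c₂/‖a‖^n)^2 * ‖a - b‖^2)/‖a - b‖^n := by gcongr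
          _ = (2^n*c₂/‖a‖^n)^2 * (‖a - b‖^2/‖a - b‖^n) := by ring
          _ = (2^n*c₂/‖a‖^n)^2 * (1/‖a - b‖^(n-2)) := by rw [htt]
          _ = 4^n*c₂^2*(1/‖a‖^(2*n)) * (1/‖a - b‖^(n-2)) := by rw [hsq]
    rcases le_or_gt ‖x - y‖ ρ with hnear | hfar
    · rcases le_or_gt (2*ρ) ‖x‖ with hx | hx
      · exact (main x y hx hnear).trans (le_add_right le_add_self)
      · rcases le_or_gt (2*ρ) ‖y‖ with hy | hy
        · have hyx : ‖y - x‖ ≤ ρ := by rwa [norm_sub_rev]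
          have h := main y x hy hyx
          rw [abs_sub_comm (f y), norm_sub_rev y] at h
          have hRR : Rq (y - x) = Rq (x - y) := by rw [← neg_sub x y, hRsymm]
          rw [hRR] at h
          exact h.trans le_add_self
        · have h1 : f x = 0 := hf0 x hx
          have h2 : f y = 0 := hf0 y hy
          rw [h1, h2, sub_self, abs_zero]
          have h3 : (0:ℝ)^2 = 0 := by norm_num
          rw [h3, zero_div]
          simp
    · have hQv : Q (x - y) = ENNReal.ofReal (1/‖x - y‖^n) :=
        Set.indicator_of_mem
          (by rw [mem_compl_iff, mem_closedBall_zero_iff]; exact not_le.2 hfar) _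
      have htp : (0:ℝ) < ‖x - y‖^n := pow_pos (lt_trans hρ hfar) n
      have key : ENNReal.ofReal (|f x - f y|^2/‖x - y‖^n) ≤
          Bf x * Q (x - y) + Bf y * Q (x - y) := by
        rw [hQv, hBdef]
        rw [show ENNReal.ofReal (2*(f x)^2) * ENNReal.ofReal (1/‖x - y‖^n)
            = ENNReal.ofReal (2*(f x)^2 * (1/‖x - y‖^n)) from
          (ENNReal.ofReal_mul (by positivity)).symm]
        rw [show ENNReal.ofReal (2*(f y)^2) * ENNReal.ofReal (1/‖x - y‖^n)
            = ENNReal.ofReal (2*(f y)^2 * (1/‖x - y‖^n)) from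
          (ENNReal.ofReal_mul (by positivity)).symm]
        rw [← ENNReal.ofReal_add (by positivity) (by positivity)]
        apply ENNReal.ofReal_le_ofReal
        have habs : |f x - f y|^2 ≤ 2*(f x)^2 + 2*(f y)^2 := by
          rw [sq_abs]
          nlinarith [sq_nonneg (f x + f y)]
        calc |f x - f y|^2/‖x - y‖^n ≤ (2*(f x)^2 + 2*(f y)^2)/‖x - y‖^n := by gcongr
          _ = 2*(f x)^2*(1/‖x - y‖^n) + 2*(f y)^2*(1/‖x - y‖^n) := by ring
      exact key.trans (le_add_right (le_add_right le_rfl))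
  have hL2 : ∫⁻ x, ENNReal.ofReal ((f x)^2) ≤ ENNReal.ofReal (K₁ * (c₁^2/ρ^d)) := by
    have hindic : ∀ x : En' n, ENNReal.ofReal ((f x)^2) =
        ((ball (0 : En' n) (2*ρ))ᶜ).indicator (fun x => ENNReal.ofReal ((f x)^2)) x := by
      intro x
      by_cases hx : x ∈ (ball (0 : En' n) (2*ρ))ᶜ
      · rw [Set.indicator_of_mem hx]
      · rw [Set.indicator_of_notMem hx]
        rw [mem_compl_iff, not_not, mem_ball_zero_iff] at hx
        rw [hf0 x hx]
        norm_num
    calc ∫⁻ x, ENNReal.ofReal ((f x)^2)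
        = ∫⁻ x in (ball (0 : En' n) (2*ρ))ᶜ, ENNReal.ofReal ((f x)^2) := by
          rw [← lintegral_indicator measurableSet_ball.compl]
          exact lintegral_congr hindic
      _ ≤ ∫⁻ x in (ball (0 : En' n) (2*ρ))ᶜ, ENNReal.ofReal (c₁^2 * (1/‖x‖^(2*d))) := by
          refine setLIntegral_mono' measurableSet_ball.compl ?_
          intro x hx
          rw [mem_compl_iff, mem_ball_zero_iff, not_lt] at hx
          refine ENNReal.ofReal_le_ofReal ?_
          have hxp : 0 < ‖x‖ := lt_of_lt_of_le (by positivity) hx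
          have h1 : |f x| ≤ c₁/‖x‖^d := hfb x hx
          have h2 : (f x)^2 ≤ (c₁/‖x‖^d)^2 := by
            rw [← sq_abs]
            exact pow_le_pow_left₀ (abs_nonneg _) h1 2
          refine h2.trans (le_of_eq ?_)
          rw [div_pow, ← pow_mul, mul_comm d 2]
          ring
      _ = ENNReal.ofReal (c₁^2) * ∫⁻ x in (ball (0 : En' n) (2*ρ))ᶜ,
            ENNReal.ofReal (1/‖x‖^(2*d)) := by
          rw [← lintegral_const_mul' _ _ ENNReal.ofReal_ne_top]
          refine setLIntegral_congr_fun measurableSet_ball.compl ?_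
          intro x _
          beta_reduce
          rw [← ENNReal.ofReal_mul (by positivity)]
      _ ≤ ENNReal.ofReal (c₁^2) * ENNReal.ofReal (K₁ * ((2*ρ)^d/(2*ρ)^(2*d))) := by
          gcongr
          exact hOut (2*d) (by omega) (2*ρ) (by positivity)
      _ ≤ ENNReal.ofReal (K₁ * (c₁^2/ρ^d)) := by
          rw [← ENNReal.ofReal_mul (by positivity)]
          refine ENNReal.ofReal_le_ofReal ?_
          have he1 : ((2*ρ):ℝ)^(2*d) = (2*ρ)^d * (2*ρ)^d := by
            rw [← pow_add]
            congr 1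
            omega
          have he2 : ((2*ρ):ℝ)^d/(2*ρ)^(2*d) = 1/(2*ρ)^d := by
            rw [he1, div_mul_eq_div_div, div_self (by positivity : ((2*ρ):ℝ)^d ≠ 0)]
          rw [he2]
          have he3 : 1/((2*ρ):ℝ)^d ≤ 1/ρ^d :=
            one_div_le_one_div_of_le (by positivity)
              (pow_le_pow_left₀ hρ.le (by linarith) d)
          calc c₁^2 * (K₁ * (1/(2*ρ)^d)) ≤ c₁^2 * (K₁ * (1/ρ^d)) := by
                have h5 := mul_le_mul_of_nonneg_left he3 hK₁0
                exact mul_le_mul_of_nonneg_left h5 (by positivity)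
            _ = K₁ * (c₁^2/ρ^d) := by ring
  have hQtrans : ∀ x : En' n, ∫⁻ y, Q (x - y) = ∫⁻ u, Q u := fun x =>
    (Measure.measurePreserving_sub_left volume x).lintegral_comp mQ
  have hRtrans : ∀ x : En' n, ∫⁻ y, Rq (x - y) = ∫⁻ u, Rq u := fun x =>
    (Measure.measurePreserving_sub_left volume x).lintegral_comp mR
  have hQint : ∫⁻ u, Q u ≤ ENNReal.ofReal (K₁ * (ρ^d/ρ^n)) := by
    rw [hQdef, lintegral_indicator measurableSet_closedBall.compl]
    refine le_trans (lintegral_mono_set (compl_subset_compl.2 ball_subset_closedBall)) ?_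
    exact hOut n (by omega) ρ hρ
  have hRint : ∫⁻ u, Rq u ≤ ENNReal.ofReal (K₂ * (ρ^d/ρ^(n-2))) := by
    rw [hRdef, lintegral_indicator measurableSet_closedBall]
    exact hInn ρ hρ
  have hAint : ∫⁻ x, Af x ≤
      ENNReal.ofReal (4^n*c₂^2) * ENNReal.ofReal (K₁ * ((2*ρ)^d/(2*ρ)^(2*n))) := by
    rw [hAdef, lintegral_indicator measurableSet_ball.compl]
    have hc : ∫⁻ x in (ball (0 : En' n) (2*ρ))ᶜ, ENNReal.ofReal (4^n*c₂^2 * (1/‖x‖^(2*n)))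
        = ENNReal.ofReal (4^n*c₂^2) * ∫⁻ x in (ball (0 : En' n) (2*ρ))ᶜ,
            ENNReal.ofReal (1/‖x‖^(2*n)) := by
      rw [← lintegral_const_mul' _ _ ENNReal.ofReal_ne_top]
      refine setLIntegral_congr_fun measurableSet_ball.compl ?_
      intro x _
      beta_reduce
      rw [← ENNReal.ofReal_mul (by positivity)]
    rw [hc]
    gcongr
    exact hOut (2*n) (by omega) (2*ρ) (by positivity)
  have hBint : ∫⁻ x, Bf x ≤ ENNReal.ofReal (2*(K₁ * (c₁^2/ρ^d))) := by
    rw [hBdef]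
    calc ∫⁻ x, ENNReal.ofReal (2*(f x)^2)
        = ∫⁻ x, ENNReal.ofReal 2 * ENNReal.ofReal ((f x)^2) := by
          refine lintegral_congr fun x => ?_
          rw [← ENNReal.ofReal_mul (by norm_num)]
      _ = ENNReal.ofReal 2 * ∫⁻ x, ENNReal.ofReal ((f x)^2) :=
          lintegral_const_mul' _ _ ENNReal.ofReal_ne_top
      _ ≤ ENNReal.ofReal 2 * ENNReal.ofReal (K₁ * (c₁^2/ρ^d)) := by gcongr
      _ = ENNReal.ofReal (2*(K₁ * (c₁^2/ρ^d))) := by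
          rw [← ENNReal.ofReal_mul (by norm_num)]
  have hJ1 : ∫⁻ p, G1 p ∂P ≤ ENNReal.ofReal (2*K₁^2*(c₁^2/ρ^n)) := by
    calc ∫⁻ p, G1 p ∂P = ∫⁻ x, ∫⁻ y, Bf x * Q (x - y) := by
          rw [hPdef, lintegral_prod _ mG1.aemeasurable]
      _ = ∫⁻ x, Bf x * ∫⁻ y, Q (x - y) :=
          lintegral_congr fun x => lintegral_const_mul' _ _ ENNReal.ofReal_ne_top
      _ = ∫⁻ x, Bf x * ∫⁻ u, Q u :=
          lintegral_congr fun x => by rw [hQtrans x]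
      _ ≤ ∫⁻ x, Bf x * ENNReal.ofReal (K₁ * (ρ^d/ρ^n)) :=
          lintegral_mono fun x => mul_le_mul_right hQint _
      _ = (∫⁻ x, Bf x) * ENNReal.ofReal (K₁ * (ρ^d/ρ^n)) :=
          lintegral_mul_const' _ _ ENNReal.ofReal_ne_top
      _ ≤ ENNReal.ofReal (2*(K₁ * (c₁^2/ρ^d))) * ENNReal.ofReal (K₁ * (ρ^d/ρ^n)) := by
          gcongr
      _ ≤ ENNReal.ofReal (2*K₁^2*(c₁^2/ρ^n)) := by
          rw [← ENNReal.ofReal_mul (by positivity)]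
          refine ENNReal.ofReal_le_ofReal ?_
          have hpow : (1/ρ^d) * (ρ^d/ρ^n) = 1/ρ^n := by
            rw [div_mul_div_comm, one_mul, div_mul_eq_div_div,
              div_self (by positivity : (ρ:ℝ)^d ≠ 0)]
          have hsplit : 2*(K₁ * (c₁^2/ρ^d)) * (K₁ * (ρ^d/ρ^n))
              = 2*K₁^2*c₁^2*((1/ρ^d) * (ρ^d/ρ^n)) := by ring
          rw [hsplit, hpow]
          exact le_of_eq (by ring)
  have hJ2 : ∫⁻ p, G2 p ∂P ≤ ENNReal.ofReal (4^n*K₁*K₂*(c₂^2/ρ^n)) := by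
    calc ∫⁻ p, G2 p ∂P = ∫⁻ x, ∫⁻ y, Af x * Rq (x - y) := by
          rw [hPdef, lintegral_prod _ mG2.aemeasurable]
      _ = ∫⁻ x, Af x * ∫⁻ y, Rq (x - y) :=
          lintegral_congr fun x => lintegral_const_mul' _ _ (hAne x)
      _ = ∫⁻ x, Af x * ∫⁻ u, Rq u :=
          lintegral_congr fun x => by rw [hRtrans x]
      _ ≤ ∫⁻ x, Af x * ENNReal.ofReal (K₂ * (ρ^d/ρ^(n-2))) :=
          lintegral_mono fun x => mul_le_mul_right hRint _
      _ = (∫⁻ x, Af x) * ENNReal.ofReal (K₂ * (ρ^d/ρ^(n-2))) :=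
          lintegral_mul_const' _ _ ENNReal.ofReal_ne_top
      _ ≤ (ENNReal.ofReal (4^n*c₂^2) * ENNReal.ofReal (K₁ * ((2*ρ)^d/(2*ρ)^(2*n)))) *
            ENNReal.ofReal (K₂ * (ρ^d/ρ^(n-2))) := by gcongr
      _ ≤ ENNReal.ofReal (4^n*K₁*K₂*(c₂^2/ρ^n)) := by
          rw [← ENNReal.ofReal_mul (by positivity), ← ENNReal.ofReal_mul (by positivity)]
          refine ENNReal.ofReal_le_ofReal ?_
          have hb1 : ((2*ρ):ℝ)^d/(2*ρ)^(2*n) ≤ ρ^d/ρ^(2*n) := by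
            rw [div_le_div_iff₀ (by positivity) (by positivity), mul_pow, mul_pow]
            have h2d : (2:ℝ)^d ≤ 2^(2*n) := pow_le_pow_right₀ one_le_two (by omega)
            have hnn : (0:ℝ) ≤ ρ^d*ρ^(2*n) := by positivity
            calc 2^d*ρ^d*ρ^(2*n) ≤ 2^(2*n)*ρ^d*ρ^(2*n) := by nlinarith
              _ = ρ^d*(2^(2*n)*ρ^(2*n)) := by ring
          have hb2 : ((ρ:ℝ)^d/ρ^(2*n)) * (ρ^d/ρ^(n-2)) = 1/ρ^n := by
            rw [div_mul_div_comm, ← pow_add]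
            have he : (ρ:ℝ)^(2*n) * ρ^(n-2) = ρ^(d+d) * ρ^n := by
              rw [← pow_add, ← pow_add]
              congr 1
              omega
            rw [he, div_mul_eq_div_div,
              div_self (by positivity : (ρ:ℝ)^(d+d) ≠ 0)]
          have hb3 : (((2*ρ):ℝ)^d/(2*ρ)^(2*n)) * (ρ^d/ρ^(n-2)) ≤ 1/ρ^n := by
            calc (((2*ρ):ℝ)^d/(2*ρ)^(2*n)) * (ρ^d/ρ^(n-2))
                ≤ (ρ^d/ρ^(2*n)) * (ρ^d/ρ^(n-2)) :=
                  mul_le_mul_of_nonneg_right hb1 (by positivity)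
              _ = 1/ρ^n := hb2
          calc 4^n*c₂^2 * (K₁ * ((2*ρ)^d/(2*ρ)^(2*n))) * (K₂ * (ρ^d/ρ^(n-2)))
              = (4^n*c₂^2*K₁*K₂) * ((((2*ρ):ℝ)^d/(2*ρ)^(2*n)) * (ρ^d/ρ^(n-2))) := by ring
            _ ≤ (4^n*c₂^2*K₁*K₂) * (1/ρ^n) :=
                mul_le_mul_of_nonneg_left hb3 (by positivity)
            _ = 4^n*K₁*K₂*(c₂^2/ρ^n) := by ring
  have hswap1 : ∫⁻ p, G1' p ∂P = ∫⁻ p, G1 p ∂P := by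
    have he : ∀ p : En' n × En' n, G1' p = G1 (Prod.swap p) := by
      intro p
      show Bf p.2 * Q (p.1 - p.2) = Bf p.2 * Q (p.2 - p.1)
      rw [← neg_sub p.2 p.1, hQsymm]
    calc ∫⁻ p, G1' p ∂P = ∫⁻ p, G1 (Prod.swap p) ∂P := lintegral_congr he
      _ = ∫⁻ p, G1 p ∂P := by rw [hPdef]; exact lintegral_prod_swap _
  have hswap2 : ∫⁻ p, G2' p ∂P = ∫⁻ p, G2 p ∂P := by
    have he : ∀ p : En' n × En' n, G2' p = G2 (Prod.swap p) := by
      intro p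
      show Af p.2 * Rq (p.1 - p.2) = Af p.2 * Rq (p.2 - p.1)
      rw [← neg_sub p.2 p.1, hRsymm]
    calc ∫⁻ p, G2' p ∂P = ∫⁻ p, G2 (Prod.swap p) ∂P := lintegral_congr he
      _ = ∫⁻ p, G2 p ∂P := by rw [hPdef]; exact lintegral_prod_swap _
  have hgag : gagSqE' n f = ∫⁻ p, F p ∂P := by
    rw [gagSqE', hPdef]
    exact (lintegral_prod _ mF.aemeasurable).symm
  have hgagle : gagSqE' n f ≤ ENNReal.ofReal (2*(2*K₁^2*(c₁^2/ρ^n))) +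
      ENNReal.ofReal (2*(4^n*K₁*K₂*(c₂^2/ρ^n))) := by
    rw [hgag]
    calc ∫⁻ p, F p ∂P ≤ ∫⁻ p, (G1 p + G1' p + G2 p + G2' p) ∂P := lintegral_mono hpt
      _ = ∫⁻ p, G1 p ∂P + ∫⁻ p, G1' p ∂P + ∫⁻ p, G2 p ∂P + ∫⁻ p, G2' p ∂P := by
          rw [lintegral_add_right _ mG2', lintegral_add_right _ mG2,
            lintegral_add_right _ mG1']
      _ = 2 * ∫⁻ p, G1 p ∂P + 2 * ∫⁻ p, G2 p ∂P := by
          rw [hswap1, hswap2]; ring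
      _ ≤ 2 * ENNReal.ofReal (2*K₁^2*(c₁^2/ρ^n)) +
            2 * ENNReal.ofReal (4^n*K₁*K₂*(c₂^2/ρ^n)) := by gcongr
      _ = _ := by
          rw [show (2:ℝ≥0∞) = ENNReal.ofReal 2 from (ENNReal.ofReal_ofNat 2).symm,
            ← ENNReal.ofReal_mul (by norm_num), ← ENNReal.ofReal_mul (by norm_num)]
  have heLp : eLpNorm f 2 volume ^ 2 = ∫⁻ x, ENNReal.ofReal ((f x)^2) := by
    have h1 : eLpNorm f 2 volume = (∫⁻ x, ENNReal.ofReal ((f x)^2)) ^ ((1:ℝ)/2) := by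
      rw [eLpNorm_eq_lintegral_rpow_enorm_toReal (by norm_num) (by norm_num),
        ENNReal.toReal_ofNat]
      congr 1
      refine lintegral_congr fun x => ?_
      rw [Real.enorm_eq_ofReal_abs,
        ENNReal.ofReal_rpow_of_nonneg (abs_nonneg _) (by norm_num)]
      congr 1
      rw [show ((2:ℝ)) = ((2:ℕ):ℝ) by norm_num, Real.rpow_natCast, sq_abs]
    rw [h1, ← ENNReal.rpow_natCast _ 2, ← ENNReal.rpow_mul]
    norm_num
  have hL2fin : eLpNorm f 2 volume ^ 2 < ⊤ := by
    rw [heLp]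
    exact lt_of_le_of_lt hL2 ENNReal.ofReal_lt_top
  refine ⟨⟨hf.continuous.aestronglyMeasurable, ?_⟩, ?_, ?_⟩
  · by_contra h
    rw [not_lt, top_le_iff] at h
    rw [h, ENNReal.top_pow two_ne_zero] at hL2fin
    exact lt_irrefl _ hL2fin
  · exact lt_of_le_of_lt hgagle
      (ENNReal.add_lt_top.2 ⟨ENNReal.ofReal_lt_top, ENNReal.ofReal_lt_top⟩)
  · calc eLpNorm f 2 volume ^ 2 + gagSqE' n f
        ≤ ENNReal.ofReal (K₁*(c₁^2/ρ^d)) + (ENNReal.ofReal (2*(2*K₁^2*(c₁^2/ρ^n))) +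
            ENNReal.ofReal (2*(4^n*K₁*K₂*(c₂^2/ρ^n)))) := by
          refine add_le_add ?_ hgagle
          rw [heLp]
          exact hL2
      _ ≤ ENNReal.ofReal ((K₁ + 4*K₁^2 + 2*4^n*K₁*K₂ + 1) *
            (c₁^2/ρ^d + (c₁^2 + c₂^2)/ρ^n)) := by
          rw [← ENNReal.ofReal_add (by positivity) (by positivity),
            ← ENNReal.ofReal_add (by positivity) (by positivity)]
          refine ENNReal.ofReal_le_ofReal ?_
          set C' : ℝ := K₁ + 4*K₁^2 + 2*4^n*K₁*K₂ + 1 with hC'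
          have h1 : (0:ℝ) ≤ c₁^2/ρ^d := by positivity
          have h2 : (0:ℝ) ≤ c₁^2/ρ^n := by positivity
          have h3 : (0:ℝ) ≤ c₂^2/ρ^n := by positivity
          have hCa : K₁ ≤ C' := by
            have : (0:ℝ) ≤ 4*K₁^2 + 2*4^n*(K₁*K₂) + 1 := by positivity
            rw [hC']; nlinarith
          have hCb : 4*K₁^2 ≤ C' := by
            have : (0:ℝ) ≤ K₁ + 2*4^n*(K₁*K₂) + 1 := by positivity
            rw [hC']; nlinarith
          have hCc : 2*4^n*K₁*K₂ ≤ C' := by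
            have : (0:ℝ) ≤ K₁ + 4*K₁^2 + 1 := by positivity
            rw [hC']; nlinarith
          calc K₁*(c₁^2/ρ^d) + (2*(2*K₁^2*(c₁^2/ρ^n)) + 2*(4^n*K₁*K₂*(c₂^2/ρ^n)))
              = K₁*(c₁^2/ρ^d) + (4*K₁^2)*(c₁^2/ρ^n) + (2*4^n*K₁*K₂)*(c₂^2/ρ^n) := by ring
            _ ≤ C'*(c₁^2/ρ^d) + C'*(c₁^2/ρ^n) + C'*(c₂^2/ρ^n) :=
                add_le_add (add_le_add (mul_le_mul_of_nonneg_right hCa h1)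
                  (mul_le_mul_of_nonneg_right hCb h2))
                  (mul_le_mul_of_nonneg_right hCc h3)
            _ = C' * (c₁^2/ρ^d + (c₁^2 + c₂^2)/ρ^n) := by ring


end GG
end
end

section
/- Let n ≥ 3, 1 ≤ j ≤ n−1, and r_B > 0. There does NOT exist a constant C > 0 such that |(∂_j E) * (δ_{R^{n-1}} ⊗ g)(x',0)| ≤ C ‖g‖_{L^∞(R^{n-1})} holds for all x' with |x'| < r_B/2 and all g ∈ L^∞(R^{n-1}) with supp g ⊆ complement of B_{r_B}(0'). Equivalently, the j-th Riesz transform R_j(g)(x') = c(n) ∫_{R^{n-1}} (x_j − y_j)/|x'−y'|^n g(y') dy' of bounded functions supported outside B_{r_B}(0') cannot be uniformly bounded on B_{r_B/2}(0') by the L^∞ norm of g. -/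
noncomputable section

open MeasureTheory Metric Set Filter
open scoped ENNReal NNReal RealInnerProductSpace

namespace GG

set_option maxHeartbeats 1000000 in
/-- Proposition 10 of the paper: the tangential Riesz-transform components
of the gradient of the single layer potential of an `L^∞` boundary datum supported outside
`B_{r_B}(0')` cannot be bounded on `B_{r_B/2}(0')` by the `L^∞` norm of the datum.  For any
nonzero constant `c` (in particular the dimensional constant `C(n)` relating `∂_j E` to the
Riesz kernel), no constant `C > 0` satisfies
`|c ∫ (x'_j - y'_j)/|x'-y'|ⁿ g(y') dy'| ≤ C ‖g‖_{L^∞(ℝ^{n-1})}` for all such `g` and all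
`|x'| < r_B/2`. -/
theorem riesz_transform_not_Linf_bounded (n : ℕ) (hn : 3 ≤ n) (j : Fin (n - 1))
    (rB : ℝ) (hrB : 0 < rB) (c : ℝ) (hc : c ≠ 0) :
    ¬ ∃ C : ℝ, 0 < C ∧
        ∀ g : En' n → ℝ, Measurable g → MemLp g ⊤ volume →
          tsupport g ⊆ (ball (0 : En' n) rB)ᶜ →
          ∀ x' : En' n, ‖x'‖ < rB / 2 →
            |c * ∫ y' : En' n, (x' j - y' j) / ‖x' - y'‖ ^ n * g y'| ≤
              C * (eLpNorm g ⊤ volume).toReal := by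
  rintro ⟨C, hC, hbd⟩
  have hm2 : 2 ≤ n - 1 := by omega
  have hmn : (n - 1) + 1 = n := by omega
  -- volume of the unit ball
  set v : ℝ := (volume (ball (0 : En' n) 1)).toReal with hv
  have hvpos : 0 < v := ENNReal.toReal_pos (measure_ball_pos volume _ one_pos).ne'
    measure_ball_lt_top.ne
  set ε : ℝ := v / 3 ^ n with hε
  have hεpos : 0 < ε := div_pos hvpos (by positivity)
  have hcε : 0 < |c| * ε := mul_pos (abs_pos.2 hc) hεpos
  obtain ⟨N, hN⟩ := exists_nat_gt (C / (|c| * ε))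
  have hCN : C < |c| * ε * N := by
    rw [div_lt_iff₀ hcε] at hN; nlinarith [hN]
  -- the family of balls
  set t : ℕ → ℝ := fun k => 2 * rB * 4 ^ k with ht
  have htpos : ∀ k, 0 < t k := fun k => by
    have : (0:ℝ) < 4 ^ k := by positivity
    simp only [ht]; positivity
  have ht2 : ∀ k, t k / 2 = rB * 4 ^ k := fun k => by simp only [ht]; ring
  set ctr : ℕ → En' n := fun k => EuclideanSpace.single j (t k) with hctr
  set B : ℕ → Set (En' n) := fun k => ball (ctr k) (t k / 2) with hB
  set K : Set (En' n) := ⋃ k ∈ Finset.range N, B k with hK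
  have hKmeas : MeasurableSet K :=
    MeasurableSet.biUnion (Finset.range N).countable_toSet fun k _ => measurableSet_ball
  -- coordinate bound
  have coord_le : ∀ z : En' n, |z j| ≤ ‖z‖ := by
    intro z
    have h := abs_real_inner_le_norm (EuclideanSpace.single j (1:ℝ)) z
    simpa [EuclideanSpace.inner_single_left, EuclideanSpace.norm_single] using h
  -- key geometric facts on each closed ball
  have key : ∀ k, ∀ y ∈ closedBall (ctr k) (t k / 2),
      t k / 2 ≤ y j ∧ y j ≤ 3 * (t k / 2) ∧ ‖y‖ ≤ 3 * (t k / 2) ∧ t k / 2 ≤ ‖y‖ := by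
    intro k y hy
    have hd : ‖y - ctr k‖ ≤ t k / 2 := by
      rwa [mem_closedBall, dist_eq_norm] at hy
    have hcoord : |y j - t k| ≤ ‖y - ctr k‖ := by
      have h := coord_le (y - ctr k)
      have hsub : (y - ctr k) j = y j - t k := by
        simp [hctr, EuclideanSpace.single_apply]
      rwa [hsub] at h
    have habs := abs_le.1 (hcoord.trans hd)
    have h1 : t k / 2 ≤ y j := by linarith [habs.1]
    have h2 : y j ≤ 3 * (t k / 2) := by linarith [habs.2]
    have hnc : ‖ctr k‖ = t k := by
      simp [hctr, EuclideanSpace.norm_single, abs_of_pos (htpos k)]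
    have h3 : ‖y‖ ≤ 3 * (t k / 2) := by
      have : ‖y‖ ≤ ‖ctr k‖ + ‖y - ctr k‖ := by
        calc ‖y‖ = ‖ctr k + (y - ctr k)‖ := by rw [add_sub_cancel]
        _ ≤ ‖ctr k‖ + ‖y - ctr k‖ := norm_add_le _ _
      rw [hnc] at this; linarith
    have h4 : t k / 2 ≤ ‖y‖ := h1.trans ((le_abs_self _).trans (coord_le y))
    exact ⟨h1, h2, h3, h4⟩
  -- the integrand restricted to K
  set f : En' n → ℝ := fun y => y j / ‖y‖ ^ n with hf
  -- integrability on each ball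
  have hint : ∀ k, IntegrableOn f (closedBall (ctr k) (t k / 2)) := by
    intro k
    have hcont : ContinuousOn f (closedBall (ctr k) (t k / 2)) := by
      apply ContinuousOn.div
      · exact ((EuclideanSpace.proj j : En' n →L[ℝ] ℝ).continuous.continuousOn :
          ContinuousOn (fun y : En' n => y j) _)
      · exact (continuous_norm.pow n).continuousOn
      · intro y hy
        have := (key k y hy).2.2.2
        have : (0:ℝ) < ‖y‖ := lt_of_lt_of_le (half_pos (htpos k)) this
        positivity
    exact hcont.integrableOn_compact (isCompact_closedBall _ _)
  have hintB : ∀ k, IntegrableOn f (B k) := fun k =>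
    (hint k).mono_set ball_subset_closedBall
  -- lower bound on each ball
  have hlow : ∀ k, ε ≤ ∫ y in B k, f y := by
    intro k
    set s : ℝ := t k / 2 with hs
    have hspos : 0 < s := half_pos (htpos k)
    have hmono : ∫ y in B k, s / (3 * s) ^ n ≤ ∫ y in B k, f y := by
      apply setIntegral_mono_on (integrableOn_const measure_ball_lt_top.ne)
        (hintB k) measurableSet_ball
      intro y hy
      obtain ⟨h1, _, h3, h4⟩ := key k y (ball_subset_closedBall hy)
      have hyn : 0 < ‖y‖ ^ n := by
        have : (0:ℝ) < ‖y‖ := lt_of_lt_of_le hspos h4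
        positivity
      exact div_le_div₀ (le_trans hspos.le h1) h1 hyn
        (by
          have : ‖y‖ ^ n ≤ (3 * s) ^ n :=
            pow_le_pow_left₀ (norm_nonneg y) (by linarith [h3]) n
          exact this)
    have hvol : (volume (B k)).toReal = s ^ (n - 1) * v := by
      rw [hB]
      simp only
      rw [← hs, Measure.addHaar_ball_of_pos volume (ctr k) hspos, finrank_euclideanSpace_fin,
        ENNReal.toReal_mul, ENNReal.toReal_ofReal (by positivity)]
    have hconst : ∫ y in B k, s / (3 * s) ^ n = s ^ (n - 1) * v * (s / (3 * s) ^ n) := by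
      rw [setIntegral_const, measureReal_def, hvol, smul_eq_mul]
    have hval : s ^ (n - 1) * v * (s / (3 * s) ^ n) = ε := by
      have hsn : s ^ (n - 1) * s = s ^ n := by rw [← pow_succ, hmn]
      have h3n : (3 * s) ^ n = 3 ^ n * s ^ n := mul_pow 3 s n
      rw [hε, h3n]
      have hsnpos : (0:ℝ) < s ^ n := by positivity
      calc s ^ (n - 1) * v * (s / (3 ^ n * s ^ n)) = v * (s ^ (n - 1) * s) / (3 ^ n * s ^ n) := by ring
      _ = v / 3 ^ n := by rw [hsn, mul_div_mul_right _ _ hsnpos.ne']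
    calc ε = ∫ y in B k, s / (3 * s) ^ n := by rw [hconst, hval]
    _ ≤ ∫ y in B k, f y := hmono
  -- disjointness
  have hdisj_lt : ∀ k l : ℕ, k < l → Disjoint (B k) (B l) := by
    intro k l hkl
    rw [Set.disjoint_left]
    intro y hyk hyl
    obtain ⟨_, h2, _, _⟩ := key k y (ball_subset_closedBall hyk)
    obtain ⟨h1', _, _, _⟩ := key l y (ball_subset_closedBall hyl)
    rw [ht2] at h2 h1'
    have h4l : (4:ℝ) ^ (k+1) ≤ 4 ^ l := pow_le_pow_right₀ (by norm_num) hkl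
    have : (4:ℝ) ^ (k+1) = 4 * 4 ^ k := by ring
    nlinarith [pow_pos (show (0:ℝ) < 4 by norm_num) k]
  have hdisj : Set.Pairwise ↑(Finset.range N) (Function.onFun Disjoint B) := by
    intro k _ l _ hkl
    rcases hkl.lt_or_gt with h | h
    · exact hdisj_lt k l h
    · exact (hdisj_lt l k h).symm
  -- the integral over K
  have hsum : ∫ y in K, f y = ∑ k ∈ Finset.range N, ∫ y in B k, f y :=
    integral_biUnion_finset _ (fun k _ => measurableSet_ball) hdisj fun k _ => hintB k
  have hKI : (N : ℝ) * ε ≤ ∫ y in K, f y := by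
    rw [hsum]
    calc (N : ℝ) * ε = ∑ _k ∈ Finset.range N, ε := by
          rw [Finset.sum_const, Finset.card_range, nsmul_eq_mul]
    _ ≤ ∑ k ∈ Finset.range N, ∫ y in B k, f y := Finset.sum_le_sum fun k _ => hlow k
  -- the test function
  set g : En' n → ℝ := fun y => -(K.indicator (fun _ => (1:ℝ)) y) with hg
  have hgmeas : Measurable g := (measurable_const.indicator hKmeas).neg
  have hgbound : ∀ y, ‖g y‖ ≤ 1 := by
    intro y
    by_cases hy : y ∈ K <;>
      simp [hg, Set.indicator_of_mem, Set.indicator_of_notMem, hy]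
  have hgmem : MemLp g ⊤ volume :=
    memLp_top_of_bound hgmeas.aestronglyMeasurable 1 (Filter.Eventually.of_forall hgbound)
  -- support
  have hgsupp : tsupport g ⊆ (ball (0 : En' n) rB)ᶜ := by
    have hsupp : Function.support g ⊆ K := by
      intro y hy
      by_contra hyK
      apply hy
      simp [hg, Set.indicator_of_notMem hyK]
    set U : Set (En' n) := ⋃ k ∈ Finset.range N, closedBall (ctr k) (t k / 2) with hU
    have hUclosed : IsClosed U :=
      isClosed_biUnion_finset fun k _ => isClosed_closedBall
    have hKU : K ⊆ U := by
      apply Set.iUnion₂_mono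
      intro k _
      exact ball_subset_closedBall
    have h1 : tsupport g ⊆ U := closure_minimal (hsupp.trans hKU) hUclosed
    refine h1.trans ?_
    intro y hy
    simp only [hU, Set.mem_iUnion] at hy
    obtain ⟨k, _, hyk⟩ := hy
    obtain ⟨_, _, _, h4⟩ := key k y hyk
    rw [ht2] at h4
    have h41 : (1:ℝ) ≤ 4 ^ k := by
      simpa using pow_le_pow_right₀ (by norm_num : (1:ℝ) ≤ 4) (Nat.zero_le k)
    intro hmem
    rw [mem_ball_zero_iff] at hmem
    nlinarith
  -- the L^∞ norm bound
  have hsn : (eLpNorm g ⊤ volume).toReal ≤ 1 := by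
    have h1 : eLpNorm g ⊤ volume ≤ ENNReal.ofReal 1 := by
      rw [eLpNorm_exponent_top]
      exact eLpNormEssSup_le_of_ae_bound (Filter.Eventually.of_forall hgbound)
    calc (eLpNorm g ⊤ volume).toReal ≤ (ENNReal.ofReal 1).toReal :=
          ENNReal.toReal_mono ENNReal.ofReal_ne_top h1
    _ = 1 := by simp
  -- identify the integral
  have hIg : (∫ y' : En' n, ((0 : En' n) j - y' j) / ‖(0 : En' n) - y'‖ ^ n * g y')
      = ∫ y in K, f y := by
    rw [← integral_indicator hKmeas]
    congr 1
    funext y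
    by_cases hy : y ∈ K
    · simp only [hg, Set.indicator_of_mem hy, hf]
      have h0 : (0 : En' n) j = 0 := rfl
      rw [h0, zero_sub, zero_sub, norm_neg]
      ring
    · simp [hg, Set.indicator_of_notMem hy]
  -- apply the assumed bound at x' = 0
  have h0mem : ‖(0 : En' n)‖ < rB / 2 := by
    rw [norm_zero]; exact half_pos hrB
  have hb := hbd g hgmeas hgmem hgsupp 0 h0mem
  rw [hIg] at hb
  have hIpos : (N : ℝ) * ε ≤ ∫ y in K, f y := hKI
  have habs : |c| * ((N : ℝ) * ε) ≤ |c * ∫ y in K, f y| := by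
    rw [abs_mul]
    apply mul_le_mul_of_nonneg_left _ (abs_nonneg c)
    exact hIpos.trans (le_abs_self _)
  have hfinal : C * (eLpNorm g ⊤ volume).toReal ≤ C := by
    calc C * (eLpNorm g ⊤ volume).toReal ≤ C * 1 :=
          mul_le_mul_of_nonneg_left hsn hC.le
    _ = C := mul_one C
  nlinarith [hb, habs, hfinal, hCN]

end GG
end
end
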